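/- Let S be a finite set, G a finite group, f : S → G a function, ρ : G →* Matrix (Fin n) (Fin n) ℂ a unitary representation, and P : Matrix (Fin n) (Fin n) ℂ a matrix. If f is P-balanced, i.e. ∑_{s ∈ S} ρ(f s) * P = 0, then ∑_{s ∈ S} (MonoidAlgebra.single (f s) 1) * ρ†(P) = 0 in MonoidAlgebra ℂ G, where ρ†(M) = ∑_{g ∈ G} (trace (ρ(g)ᴴ * M)) • (MonoidAlgebra.single g 1). (Hence in the generalized Deutsch–Jozsa algorithm with oracle f and ancilla state ρ†(P), the amplitude for measuring the query register in the uniform superposition state is zero.) -/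

import Mathlib

open Matrix BigOperators

/-- A matrix representation is unitary if every `ρ g` is a unitary matrix. -/
def IsUnitaryRep {G : Type*} [Group G] {n : ℕ}
    (ρ : G →* Matrix (Fin n) (Fin n) ℂ) : Prop :=
  ∀ g : G, (ρ g)ᴴ * ρ g = 1

/-- A matrix representation is irreducible if the only subspaces of `ℂⁿ`
invariant under every `ρ g` are the zero subspace and the whole space. -/
def IsIrreducibleRep {G : Type*} [Group G] {n : ℕ}
    (ρ : G →* Matrix (Fin n) (Fin n) ℂ) : Prop :=
  ∀ W : Submodule ℂ (Fin n → ℂ),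
    (∀ g : G, ∀ v ∈ W, (ρ g).mulVec v ∈ W) → W = ⊥ ∨ W = ⊤

/-- The adjoint of the linear extension of a representation to the group
algebra: `rhoDag ρ M = ∑ g, trace(ρ(g)ᴴ * M) • MonoidAlgebra.single g 1`. -/
noncomputable def rhoDag {G : Type*} [Group G] [Fintype G] {n : ℕ}
    (ρ : G →* Matrix (Fin n) (Fin n) ℂ)
    (M : Matrix (Fin n) (Fin n) ℂ) : MonoidAlgebra ℂ G :=
  ∑ g : G, (Matrix.trace ((ρ g)ᴴ * M)) • MonoidAlgebra.single g (1 : ℂ)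

/-! For unitary `ρ`, the map `ρ†` intertwines left multiplication by `g` on the group algebra with
left multiplication by `ρ g` on matrices, since `ρ(x⁻¹ g)ᴴ = ρ(g)ᴴ ρ(x)`. Being linear, `ρ†` then
sends `∑ s, ρ (f s) * P = 0` to the sum in question. -/

lemma IsUnitaryRep.conjTranspose_map_inv {G : Type*} [Group G] {n : ℕ}
    {ρ : G →* Matrix (Fin n) (Fin n) ℂ} (hu : IsUnitaryRep ρ) (g : G) :
    (ρ g⁻¹)ᴴ = ρ g := by
  refine left_inv_eq_right_inv (hu g⁻¹) ?_
  rw [← map_mul, inv_mul_cancel, map_one]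

section rhoDag

variable {G : Type*} [Group G] [Fintype G] {n : ℕ}

lemma coeff_rhoDag (ρ : G →* Matrix (Fin n) (Fin n) ℂ) (M : Matrix (Fin n) (Fin n) ℂ) (g : G) :
    (rhoDag ρ M).coeff g = trace ((ρ g)ᴴ * M) := by
  classical
  simp [rhoDag, MonoidAlgebra.coeff_sum, MonoidAlgebra.coeff_single, Finsupp.single_apply]

lemma rhoDag_zero (ρ : G →* Matrix (Fin n) (Fin n) ℂ) : rhoDag ρ 0 = 0 := by
  simp [rhoDag]

lemma rhoDag_sum (ρ : G →* Matrix (Fin n) (Fin n) ℂ) {ι : Type*} (s : Finset ι)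
    (M : ι → Matrix (Fin n) (Fin n) ℂ) :
    rhoDag ρ (∑ i ∈ s, M i) = ∑ i ∈ s, rhoDag ρ (M i) := by
  simp only [rhoDag, Matrix.mul_sum, trace_sum, Finset.sum_smul]
  exact Finset.sum_comm

lemma IsUnitaryRep.single_mul_rhoDag {ρ : G →* Matrix (Fin n) (Fin n) ℂ} (hu : IsUnitaryRep ρ)
    (x : G) (M : Matrix (Fin n) (Fin n) ℂ) :
    MonoidAlgebra.single x 1 * rhoDag ρ M = rhoDag ρ (ρ x * M) := by
  ext g
  rw [MonoidAlgebra.coeff_single_mul_apply, coeff_rhoDag, coeff_rhoDag, one_mul, map_mul,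
    conjTranspose_mul, hu.conjTranspose_map_inv, Matrix.mul_assoc]

end rhoDag

theorem stmt12 {S : Type*} [Fintype S] {G : Type*} [Group G] [Fintype G] {n : ℕ}
    (f : S → G) (ρ : G →* Matrix (Fin n) (Fin n) ℂ) (hu : IsUnitaryRep ρ)
    (P : Matrix (Fin n) (Fin n) ℂ)
    (hbal : ∑ s : S, ρ (f s) * P = 0) :
    ∑ s : S, (MonoidAlgebra.single (f s) (1 : ℂ)) * rhoDag ρ P = 0 := by
  calc ∑ s : S, MonoidAlgebra.single (f s) (1 : ℂ) * rhoDag ρ P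
      = ∑ s : S, rhoDag ρ (ρ (f s) * P) := by simp only [hu.single_mul_rhoDag]
    _ = rhoDag ρ (∑ s : S, ρ (f s) * P) := (rhoDag_sum ρ _ _).symm
    _ = 0 := by rw [hbal, rhoDag_zero]
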